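/- Let (E',F') →f (E,F) →g (E'',F'') be an admissible exact sequence of X-filtered R-modules in which f and g are boundedly bicontrolled of filtration degree ≤ b. If F is d-insular, then F' is (2b + d)-insular. -/

import Mathlib

open Set Metric

/-- The metric `D`-enlargement `S[D]` of a subset `S` of a metric space `X`. -/
def enl {X : Type*} [MetricSpace X] (S : Set X) (D : ℝ) : Set X :=
  {x : X | ∃ s ∈ S, dist x s ≤ D}

/-- `F` is an `X`-filtration of the `R`-module `M`: a monotone assignment of submodules
with `F ∅ = 0` and `F X = M`. -/
def IsXFiltration {R X M : Type*} [Ring R] [MetricSpace X] [AddCommGroup M] [Module R M]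
    (F : Set X → Submodule R M) : Prop :=
  Monotone F ∧ F (∅ : Set X) = ⊥ ∧ F Set.univ = ⊤

/-- `f` is boundedly controlled with bound `D`: `f(F₁(S)) ⊆ F₂(S[D])` for all `S`. -/
def BddCtrl {R X M₁ M₂ : Type*} [Ring R] [MetricSpace X]
    [AddCommGroup M₁] [Module R M₁] [AddCommGroup M₂] [Module R M₂]
    (F₁ : Set X → Submodule R M₁) (F₂ : Set X → Submodule R M₂)
    (f : M₁ →ₗ[R] M₂) (D : ℝ) : Prop :=
  ∀ S : Set X, (F₁ S).map f ≤ F₂ (enl S D)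

/-- `f` is boundedly bicontrolled of filtration degree `≤ D`: in addition to being
boundedly controlled with bound `D`, `range(f) ∩ F₂(S) ⊆ f(F₁(S[D]))` for all `S`. -/
def BddBictrl {R X M₁ M₂ : Type*} [Ring R] [MetricSpace X]
    [AddCommGroup M₁] [Module R M₁] [AddCommGroup M₂] [Module R M₂]
    (F₁ : Set X → Submodule R M₁) (F₂ : Set X → Submodule R M₂)
    (f : M₁ →ₗ[R] M₂) (D : ℝ) : Prop :=
  BddCtrl F₁ F₂ f D ∧
    ∀ S : Set X, LinearMap.range f ⊓ F₂ S ≤ (F₁ (enl S D)).map f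

/-- `(M, F)` is `D`-lean: `F(S)` is contained in the sum of the `F(B_D(x))` over `x ∈ S`. -/
def IsLean {R X M : Type*} [Ring R] [MetricSpace X] [AddCommGroup M] [Module R M]
    (F : Set X → Submodule R M) (D : ℝ) : Prop :=
  ∀ S : Set X, F S ≤ ⨆ x ∈ S, F (Metric.closedBall x D)

/-- `(M, F)` is `d`-insular: `F(T) ∩ F(U) ⊆ F(T[d] ∩ U[d])` for all `T`, `U`. -/
def IsInsular {R X M : Type*} [Ring R] [MetricSpace X] [AddCommGroup M] [Module R M]
    (F : Set X → Submodule R M) (d : ℝ) : Prop :=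
  ∀ T U : Set X, F T ⊓ F U ≤ F (enl T d ∩ enl U d)

lemma enl_mono {X : Type*} [MetricSpace X] {S T : Set X} (h : S ⊆ T) (D : ℝ) :
    enl S D ⊆ enl T D := fun x ⟨s, hs, hd⟩ => ⟨s, h hs, hd⟩

lemma enl_enl {X : Type*} [MetricSpace X] (S : Set X) (a c : ℝ) :
    enl (enl S a) c ⊆ enl S (a + c) := by
  rintro x ⟨y, ⟨s, hs, h1⟩, h2⟩
  exact ⟨s, hs, (dist_triangle x y s).trans (by linarith)⟩

theorem insular_sub
    {R X M' M M'' : Type*} [Ring R] [MetricSpace X]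
    [AddCommGroup M'] [Module R M'] [AddCommGroup M] [Module R M]
    [AddCommGroup M''] [Module R M'']
    (F' : Set X → Submodule R M') (F : Set X → Submodule R M)
    (F'' : Set X → Submodule R M'')
    (hF' : IsXFiltration F') (hF : IsXFiltration F) (hF'' : IsXFiltration F'')
    (f : M' →ₗ[R] M) (g : M →ₗ[R] M'') (b : ℝ) (hb : 0 ≤ b)
    (hfb : BddBictrl F' F f b) (hgb : BddBictrl F F'' g b)
    (hfi : Function.Injective f) (hgs : Function.Surjective g)
    (hex : LinearMap.range f = LinearMap.ker g)
    (d : ℝ) (hd : 0 ≤ d) (hins : IsInsular F d) :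
    IsInsular F' (2*b + d) := by
  intro T U x hx
  obtain ⟨hxT, hxU⟩ := hx
  have hfT : f x ∈ F (enl T b) := hfb.1 T ⟨x, hxT, rfl⟩
  have hfU : f x ∈ F (enl U b) := hfb.1 U ⟨x, hxU, rfl⟩
  have h1 : f x ∈ F (enl (enl T b) d ∩ enl (enl U b) d) := hins _ _ ⟨hfT, hfU⟩
  have h2 : f x ∈ (F' (enl (enl (enl T b) d ∩ enl (enl U b) d) b)).map f :=
    hfb.2 _ ⟨⟨x, rfl⟩, h1⟩
  obtain ⟨y, hy, hyx⟩ := h2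
  have hxy : y = x := hfi hyx
  subst hxy
  refine hF'.1 ?_ hy
  intro z hz
  have key : ∀ S : Set X, z ∈ enl (enl (enl S b) d) b → z ∈ enl S (2*b + d) := by
    intro S h
    have := enl_enl S (b + d) b (enl_mono (enl_enl S b d) b h)
    convert this using 2
    ring
  exact ⟨key T ((enl_mono (fun p hp => hp.1) b) hz),
         key U ((enl_mono (fun p hp => hp.2) b) hz)⟩
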